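/- arXiv:2206.04020 — 6 statements merged into one kernel-verified Lean document; each statement's English description precedes it below -/
import Mathlib

section
/- Let f : ℝⁿ → ℝ be Lipschitz continuous around a point x̄ and Dini–Hadamard regular at x̄. Then for every ε > 0 the ε-Fréchet subdifferential of f at x̄ equals the Minkowski sum of the Fréchet subdifferential of f at x̄ and the closed ball of radius ε: ∂̂_ε f(x̄) = ∂̂ f(x̄) + ε𝔹. -/
open Filter Topology Metric Set Pointwise

abbrev En (n : ℕ) := EuclideanSpace ℝ (Fin n)

/-- Subderivative `d f(x)(w) := liminf_{t↓0, w'→w} (f(x+tw') − f(x))/t`. -/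
noncomputable def subderiv {V : Type*} [NormedAddCommGroup V] [NormedSpace ℝ V]
    (f : V → ℝ) (x w : V) : EReal :=
  Filter.liminf (fun p : ℝ × V => (((f (x + p.1 • p.2) - f x) / p.1 : ℝ) : EReal))
    ((𝓝[>] (0:ℝ)) ×ˢ 𝓝 w)

/-- Fréchet subdifferential `∂̂ f(x̄) := {v : ⟨v,w⟩ ≤ d f(x̄)(w) ∀ w}`. -/
noncomputable def frechetSubdiff {n : ℕ} (f : En n → ℝ) (x : En n) : Set (En n) :=
  {v | ∀ w, (((inner ℝ v w : ℝ)) : EReal) ≤ subderiv f x w}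

/-- ε-Fréchet subdifferential `∂̂_ε f(x̄) := {v : ⟨v,w⟩ − ε‖w‖ ≤ d f(x̄)(w) ∀ w}`. -/
noncomputable def epsSubdiff {n : ℕ} (f : En n → ℝ) (x : En n) (ε : ℝ) : Set (En n) :=
  {v | ∀ w, (((inner ℝ v w : ℝ) - ε * ‖w‖ : ℝ) : EReal) ≤ subderiv f x w}

/-! Regularity identifies the subderivative with the support function of `∂̂ f(x̄)`, a closed
convex set. A point `v` of `∂̂_ε f(x̄)` outside the closed convex set `∂̂ f(x̄) + ε𝔹` could be
strictly separated from it by some direction `w`; but the support function of `∂̂ f(x̄) + ε𝔹`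
at `w` is `d f(x̄)(w) + ε‖w‖ ≥ ⟨v, w⟩`. -/

section InnerProductSpace

variable {E : Type*} [NormedAddCommGroup E] [InnerProductSpace ℝ E]

lemma convex_setOf_inner_le_ereal (w : E) (c : EReal) :
    Convex ℝ {v : E | ((inner ℝ v w : ℝ) : EReal) ≤ c} :=
  ((ordConnected_Iic.preimage_mono EReal.coe_strictMono.monotone).convex).is_linear_preimage
    (f := fun v : E => inner ℝ v w) ⟨fun _ _ => inner_add_left _ _ _,
      fun _ _ => real_inner_smul_left _ _ _⟩

lemma isClosed_setOf_inner_le_ereal (w : E) (c : EReal) :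
    IsClosed {v : E | ((inner ℝ v w : ℝ) : EReal) ≤ c} :=
  isClosed_le (continuous_coe_real_ereal.comp (continuous_id.inner continuous_const))
    continuous_const

lemma exists_mem_closedBall_inner_eq (w : E) {ε : ℝ} (hε : 0 ≤ ε) :
    ∃ b ∈ closedBall (0 : E) ε, inner ℝ w b = ε * ‖w‖ := by
  rcases eq_or_ne w 0 with rfl | hw
  · exact ⟨0, mem_closedBall_self hε, by simp⟩
  have hw' : 0 < ‖w‖ := norm_pos_iff.mpr hw
  refine ⟨(ε / ‖w‖) • w, ?_, ?_⟩
  · rw [mem_closedBall_zero_iff, norm_smul, Real.norm_of_nonneg (by positivity),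
      div_mul_cancel₀ _ hw'.ne']
  · rw [real_inner_smul_right, real_inner_self_eq_norm_sq]
    field_simp

variable [ProperSpace E]

theorem mem_add_closedBall_of_forall_inner_sub_le_sSup {A : Set E} (hAconv : Convex ℝ A)
    (hAclosed : IsClosed A) {ε : ℝ} (hε : 0 ≤ ε) {v : E}
    (hv : ∀ w, ((inner ℝ v w - ε * ‖w‖ : ℝ) : EReal) ≤
      sSup ((fun a => ((inner ℝ a w : ℝ) : EReal)) '' A)) :
    v ∈ A + closedBall (0 : E) ε := by
  by_contra hvS
  obtain ⟨g, u, hgS, hgv⟩ := geometric_hahn_banach_closed_point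
    (hAconv.add (convex_closedBall 0 ε))
    (hAclosed.add_right_of_isCompact (isCompact_closedBall 0 ε)) hvS
  set w := (InnerProductSpace.toDual ℝ E).symm g
  have hg : ∀ y, g y = inner ℝ w y := fun y => InnerProductSpace.toDual_symm_apply.symm
  obtain ⟨b, hb, hwb⟩ := exists_mem_closedBall_inner_eq w hε
  have hsup : sSup ((fun a => ((inner ℝ a w : ℝ) : EReal)) '' A) ≤
      ((u - ε * ‖w‖ : ℝ) : EReal) := by
    refine sSup_le ?_
    rintro _ ⟨a, ha, rfl⟩
    have hab := hgS (a + b) (add_mem_add ha hb)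
    rw [hg, inner_add_right, hwb, real_inner_comm] at hab
    exact EReal.coe_le_coe_iff.mpr (by linarith)
  have hvw := EReal.coe_le_coe_iff.mp ((hv w).trans hsup)
  rw [hg, real_inner_comm] at hgv
  linarith

end InnerProductSpace

lemma convex_frechetSubdiff {n : ℕ} (f : En n → ℝ) (x : En n) :
    Convex ℝ (frechetSubdiff f x) := by
  simpa only [frechetSubdiff, ofPred_forall] using
    convex_iInter fun w => convex_setOf_inner_le_ereal w (subderiv f x w)

lemma isClosed_frechetSubdiff {n : ℕ} (f : En n → ℝ) (x : En n) :
    IsClosed (frechetSubdiff f x) := by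
  simpa only [frechetSubdiff, ofPred_forall] using
    isClosed_iInter fun w => isClosed_setOf_inner_le_ereal w (subderiv f x w)

lemma frechetSubdiff_add_closedBall_subset_epsSubdiff {n : ℕ} (f : En n → ℝ) (x : En n)
    (ε : ℝ) : frechetSubdiff f x + closedBall (0 : En n) ε ⊆ epsSubdiff f x ε := by
  rintro _ ⟨a, ha, b, hb, rfl⟩ w
  have hbw : inner ℝ b w ≤ ε * ‖w‖ := (real_inner_le_norm b w).trans
    (mul_le_mul_of_nonneg_right (mem_closedBall_zero_iff.mp hb) (norm_nonneg w))
  refine le_trans (EReal.coe_le_coe_iff.mpr ?_) (ha w)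
  rw [inner_add_left]
  linarith

theorem stmt0_general {n : ℕ} (f : En n → ℝ) (x : En n)
    (hreg : ∀ w, subderiv f x w =
      sSup ((fun v => (((inner ℝ v w : ℝ)) : EReal)) '' frechetSubdiff f x))
    (ε : ℝ) (hε : 0 < ε) :
    epsSubdiff f x ε = frechetSubdiff f x + Metric.closedBall (0 : En n) ε := by
  refine Subset.antisymm (fun v hv => ?_) (frechetSubdiff_add_closedBall_subset_epsSubdiff f x ε)
  refine mem_add_closedBall_of_forall_inner_sub_le_sSup (convex_frechetSubdiff f x)
    (isClosed_frechetSubdiff f x) hε.le fun w => ?_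
  rw [← hreg w]
  exact hv w

/-- If `f` is Lipschitz continuous around `x̄` and Dini–Hadamard regular at `x̄`, then
`∂̂_ε f(x̄) = ∂̂ f(x̄) + ε𝔹`. -/
theorem stmt0 {n : ℕ} (f : En n → ℝ) (x : En n)
    (hLip : ∃ δ > (0:ℝ), ∃ K : NNReal, LipschitzOnWith K f (Metric.ball x δ))
    (hreg : ∀ w, subderiv f x w =
      sSup ((fun v => (((inner ℝ v w : ℝ)) : EReal)) '' frechetSubdiff f x))
    (ε : ℝ) (hε : 0 < ε) :
    epsSubdiff f x ε = frechetSubdiff f x + Metric.closedBall (0 : En n) ε :=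
  stmt0_general f x hreg ε hε
end

section
/- Let X ⊆ ℝᵐ be closed, F : ℝⁿ → ℝᵐ be semi-differentiable at x̄, and let x̄ belong to Ω := {x ∈ ℝⁿ : F(x) ∈ X}. If the metric subregularity constraint qualification holds at x̄ with constant κ > 0 (i.e., dist(x; Ω) ≤ κ·dist(F(x); X) for all x in some neighborhood of x̄), then the same estimate holds globally at the tangent level: for all w ∈ ℝⁿ, dist(w; T_Ω(x̄)) ≤ κ·dist(dF(x̄)(w); T_X(F(x̄))). -/
/-!
Take `u ∈ T_X(F x̄)` with `‖dF(x̄)(w) - u‖ < r`, realised by `F x̄ + t_k s_k ∈ X`, `s_k → u`.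
Semi-differentiability gives `dist(F(x̄ + t_k w); X) ≤ t_k r` for large `k`, so metric
subregularity puts a point `q_k ∈ Ω` within `t_k (κ r + ε)` of `x̄ + t_k w`. The directions
`(q_k - x̄)/t_k` stay within `κ r + ε` of `w`, and by compactness a subsequence converges to an
element of `T_Ω(x̄)`.
-/

open Filter Topology Metric Set

/-- Semi-differentiability with semi-derivative `g`:
`dF(x)(w) := lim_{t↓0, w'→w} (F(x+tw') − F(x))/t` exists for every `w`. -/
def HasSemiDerivAt {V W : Type*} [NormedAddCommGroup V] [NormedSpace ℝ V]
    [NormedAddCommGroup W] [NormedSpace ℝ W] (F : V → W) (x : V) (g : V → W) : Prop :=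
  ∀ w, Filter.Tendsto (fun p : ℝ × V => (p.1)⁻¹ • (F (x + p.1 • p.2) - F x))
    ((𝓝[>] (0:ℝ)) ×ˢ 𝓝 w) (𝓝 (g w))

/-- Bouligand tangent cone `T_X(x) := {w : ∃ t_k ↓ 0, w_k → w, x + t_k w_k ∈ X}`. -/
def tanCone {V : Type*} [NormedAddCommGroup V] [NormedSpace ℝ V] (X : Set V) (x : V) : Set V :=
  {w | ∃ t : ℕ → ℝ, ∃ v : ℕ → V, (∀ k, 0 < t k) ∧ Filter.Tendsto t Filter.atTop (𝓝 0) ∧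
    Filter.Tendsto v Filter.atTop (𝓝 w) ∧ ∀ k, x + t k • v k ∈ X}

section TangentCone

variable {V W : Type*} [NormedAddCommGroup V] [NormedSpace ℝ V]
  [NormedAddCommGroup W] [NormedSpace ℝ W]

lemma zero_mem_tanCone {X : Set V} {x : V} (hx : x ∈ X) : (0 : V) ∈ tanCone X x := by
  refine ⟨fun k => ((k : ℝ) + 1)⁻¹, fun _ => 0, fun k => by positivity, ?_, tendsto_const_nhds,
    fun k => by simpa using hx⟩
  simpa [one_div] using tendsto_one_div_add_atTop_nhds_zero_nat (𝕜 := ℝ)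

lemma dist_inv_smul_sub {t : ℝ} (ht : 0 < t) (x y v : V) :
    dist (t⁻¹ • (y - x)) v = t⁻¹ * dist y (x + t • v) := by
  calc dist (t⁻¹ • (y - x)) v = dist (t⁻¹ • (y - x)) (t⁻¹ • (t • v)) := by
        rw [inv_smul_smul₀ ht.ne']
    _ = t⁻¹ * dist y (x + t • v) := by
        rw [dist_smul₀, Real.norm_of_nonneg (inv_nonneg.2 ht.le), dist_eq_norm, dist_eq_norm,
          sub_sub]

lemma HasSemiDerivAt.tendsto_diffQuot {F : V → W} {x : V} {dF : V → W}
    (hF : HasSemiDerivAt F x dF) {t : ℕ → ℝ} {v : ℕ → V} {w : V}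
    (ht_pos : ∀ k, 0 < t k) (ht : Tendsto t atTop (𝓝 0)) (hv : Tendsto v atTop (𝓝 w)) :
    Tendsto (fun k => (t k)⁻¹ • (F (x + t k • v k) - F x)) atTop (𝓝 (dF w)) :=
  (hF w).comp <| (tendsto_nhdsWithin_of_tendsto_nhds_of_eventually_within _ ht
    (Eventually.of_forall ht_pos)).prodMk hv

lemma mem_tanCone_of_frequently_dist_le [ProperSpace V] {Ω : Set V} {x w : V} {r : ℝ}
    {t : ℕ → ℝ} {v : ℕ → V} (ht_pos : ∀ k, 0 < t k) (ht : Tendsto t atTop (𝓝 0))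
    (hΩ : ∀ k, x + t k • v k ∈ Ω) (hv : ∃ᶠ k in atTop, dist (v k) w ≤ r) :
    ∃ a ∈ tanCone Ω x, dist a w ≤ r := by
  obtain ⟨a, ha, φ, hφ, hva⟩ := tendsto_subseq_of_frequently_bounded isBounded_closedBall
    (hv.mono fun k hk => mem_closedBall.2 hk)
  rw [isClosed_closedBall.closure_eq] at ha
  exact ⟨a, ⟨t ∘ φ, v ∘ φ, fun k => ht_pos _, ht.comp hφ.tendsto_atTop, hva, fun k => hΩ _⟩, ha⟩

lemma infDist_tanCone_le_of_eventually [ProperSpace V] {Ω : Set V} {x w : V} {r : ℝ}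
    {t : ℕ → ℝ} (hx : x ∈ Ω) (ht_pos : ∀ k, 0 < t k) (ht : Tendsto t atTop (𝓝 0))
    (hdist : ∀ᶠ k in atTop, infDist (x + t k • w) Ω ≤ t k * r) :
    infDist w (tanCone Ω x) ≤ r := by
  refine le_of_forall_pos_le_add fun ε hε => ?_
  have hq : ∀ k, ∃ q ∈ Ω, dist (x + t k • w) q < infDist (x + t k • w) Ω + t k * ε := fun k =>
    (infDist_lt_iff ⟨x, hx⟩).1 (lt_add_of_pos_right _ (mul_pos (ht_pos k) hε))
  choose q hqΩ hq_dist using hq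
  have hΩ : ∀ k, x + t k • ((t k)⁻¹ • (q k - x)) ∈ Ω := fun k => by
    simpa [smul_inv_smul₀ (ht_pos k).ne'] using hqΩ k
  have hclose : ∀ᶠ k in atTop, dist ((t k)⁻¹ • (q k - x)) w ≤ r + ε := by
    filter_upwards [hdist] with k hk
    rw [dist_inv_smul_sub (ht_pos k), inv_mul_le_iff₀ (ht_pos k), dist_comm]
    linarith [hq_dist k]
  obtain ⟨a, ha, haw⟩ := mem_tanCone_of_frequently_dist_le ht_pos ht hΩ hclose.frequently
  exact (infDist_le_dist_of_mem ha).trans (by rwa [dist_comm])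

lemma exists_eventually_infDist_image_le {F : V → W} {X : Set W} {x w : V} {dF : V → W}
    {r : ℝ} (hF : HasSemiDerivAt F x dF) (hx : F x ∈ X)
    (hr : infDist (dF w) (tanCone X (F x)) < r) :
    ∃ t : ℕ → ℝ, (∀ k, 0 < t k) ∧ Tendsto t atTop (𝓝 0) ∧
      ∀ᶠ k in atTop, infDist (F (x + t k • w)) X ≤ t k * r := by
  obtain ⟨u, ⟨t, s, ht_pos, ht, hs, hX⟩, hu⟩ :=
    (infDist_lt_iff ⟨0, zero_mem_tanCone hx⟩).1 hr
  have hquot := hF.tendsto_diffQuot ht_pos ht (tendsto_const_nhds (x := w))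
  have hnear : ∀ᶠ k in atTop, dist ((t k)⁻¹ • (F (x + t k • w) - F x)) (s k) < r :=
    (hquot.dist hs).eventually_lt_const hu
  refine ⟨t, ht_pos, ht, hnear.mono fun k hk => ?_⟩
  rw [dist_inv_smul_sub (ht_pos k), inv_mul_lt_iff₀ (ht_pos k)] at hk
  exact (infDist_le_dist_of_mem (hX k)).trans hk.le

end TangentCone

theorem stmt1_general {n m : ℕ} (F : En n → En m) (X : Set (En m))
    (x : En n) (hx : F x ∈ X)
    (dF : En n → En m) (hF : HasSemiDerivAt F x dF)
    (κ : ℝ) (hκ : 0 < κ)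
    (hMSQC : ∀ᶠ x' in 𝓝 x, infDist x' {z | F z ∈ X} ≤ κ * infDist (F x') X) :
    ∀ w, infDist w (tanCone {z | F z ∈ X} x) ≤ κ * infDist (dF w) (tanCone X (F x)) := by
  intro w
  suffices h : ∀ r, infDist (dF w) (tanCone X (F x)) < r →
      infDist w (tanCone {z | F z ∈ X} x) ≤ κ * r by
    refine le_of_forall_pos_le_add fun ε hε => ?_
    calc _ ≤ κ * (infDist (dF w) (tanCone X (F x)) + ε / κ) := h _ (by linarith [div_pos hε hκ])
      _ = _ := by field_simp
  intro r hr
  obtain ⟨t, ht_pos, ht, hFt⟩ := exists_eventually_infDist_image_le hF hx hr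
  have hray : Tendsto (fun k => x + t k • w) atTop (𝓝 x) := by
    simpa using tendsto_const_nhds.add (ht.smul_const w)
  refine infDist_tanCone_le_of_eventually (show x ∈ {z | F z ∈ X} from hx) ht_pos ht ?_
  filter_upwards [hray.eventually hMSQC, hFt] with k hΩ hX
  calc _ ≤ κ * infDist (F (x + t k • w)) X := hΩ
    _ ≤ κ * (t k * r) := mul_le_mul_of_nonneg_left hX hκ.le
    _ = t k * (κ * r) := by ring

/-- Preservation of metric subregularity by tangent cones: if the metric subregularity
constraint qualification holds at `x̄ ∈ Ω := {x : F(x) ∈ X}` with constant `κ`, then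
`dist(w; T_Ω(x̄)) ≤ κ · dist(dF(x̄)(w); T_X(F(x̄)))` for all `w`. -/
theorem stmt1 {n m : ℕ} (F : En n → En m) (X : Set (En m)) (hX : IsClosed X)
    (x : En n) (hx : F x ∈ X)
    (dF : En n → En m) (hF : HasSemiDerivAt F x dF)
    (κ : ℝ) (hκ : 0 < κ)
    (hMSQC : ∀ᶠ x' in 𝓝 x, infDist x' {z | F z ∈ X} ≤ κ * infDist (F x') X) :
    ∀ w, infDist w (tanCone {z | F z ∈ X} x) ≤ κ * infDist (dF w) (tanCone X (F x)) :=
  stmt1_general F X x hx dF hF κ hκ hMSQC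
end

section
/- Let X ⊆ ℝⁿ be nonempty and closed and let q(x) := ½·dist²(x; X) with the Euclidean distance. Then q is semi-differentiable at every x ∈ ℝⁿ, and its semi-derivative is given by d q(x)(w) = min { ⟨x − y, w⟩ : y ∈ proj_X(x) }, where proj_X(x) is the (nonempty compact) set of Euclidean nearest points of X to x. -/
open Filter Topology Metric Set

/-- Euclidean projection set `proj_X(x) := {y ∈ X : ‖x − y‖ = dist(x;X)}`. -/
noncomputable def projSet {V : Type*} [NormedAddCommGroup V] [NormedSpace ℝ V]
    (X : Set V) (x : V) : Set V :=
  {y ∈ X | dist x y = Metric.infDist x X}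

/-!
Expanding `‖x + t w' - y‖²` gives two-sided bounds on the difference quotient of `q`: it is at
most `⟪x - y₀, w'⟫ + t ‖w'‖² / 2` for `y₀ ∈ proj_X(x)`, and at least `⟪x - y, w'⟫` for
`y ∈ proj_X(x + t w')`. Choosing `y₀` to minimise `⟪x - ·, w⟫` on the compact set `proj_X(x)`
handles the upper bound. For the lower bound, compactness makes the projection upper
hemicontinuous, so `y` eventually lies where `⟪x - ·, w'⟫` exceeds any `a < min`.
-/

open scoped RealInnerProductSpace

lemma sq_infDist_le_of_mem {V : Type*} [SeminormedAddCommGroup V] {X : Set V} {y : V}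
    (hy : y ∈ X) (z : V) : infDist z X ^ 2 ≤ ‖z - y‖ ^ 2 := by
  rw [← dist_eq_norm]
  exact pow_le_pow_left₀ infDist_nonneg (infDist_le_dist_of_mem hy) 2

lemma Continuous.tendsto_nhdsGT_zero_prod {E F : Type*} [TopologicalSpace E] [TopologicalSpace F]
    {f : ℝ × E → F} (hf : Continuous f) (w : E) :
    Tendsto f (𝓝[>] 0 ×ˢ 𝓝 w) (𝓝 (f (0, w))) :=
  (hf.tendsto _).mono_left <| by
    rw [nhds_prod_eq]
    exact prod_mono nhdsWithin_le_nhds le_rfl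

section NormedSpace

variable {V : Type*} [NormedAddCommGroup V] [NormedSpace ℝ V] {X : Set V}

lemma infDist_eq_norm_of_mem_projSet {y z : V} (hy : y ∈ projSet X z) :
    infDist z X = ‖z - y‖ := by
  rw [← hy.2, dist_eq_norm]

lemma projSet_nonempty [ProperSpace V] (hX : IsClosed X) (hne : X.Nonempty) (x : V) :
    (projSet X x).Nonempty :=
  let ⟨y, hyX, hy⟩ := hX.exists_infDist_eq_dist hne x
  ⟨y, hyX, hy.symm⟩

lemma isCompact_projSet [ProperSpace V] (hX : IsClosed X) (x : V) : IsCompact (projSet X x) := by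
  refine (isCompact_closedBall x (infDist x X)).of_isClosed_subset ?_ fun y hy => ?_
  · exact hX.inter (isClosed_eq (continuous_const.dist continuous_id) continuous_const)
  · rw [mem_closedBall, dist_comm]
    exact hy.2.le

lemma eventually_projSet_subset [ProperSpace V] (hX : IsClosed X) {x : V} {U : Set V}
    (hU : IsOpen U) (hPU : projSet X x ⊆ U) : ∀ᶠ z in 𝓝 x, projSet X z ⊆ U := by
  set m := infDist x X
  set K := (X ∩ closedBall x (m + 1)) \ U
  have hK : IsCompact K := ((isCompact_closedBall x _).inter_left hX).diff hU
  -- Points of `K` are strictly farther from `x` than `m`, so by compactness of `K` none of them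
  -- is a nearest point of any `z` close to `x`.
  have hfar : ∀ᶠ z in 𝓝 x, ∀ y ∈ K, infDist z X < dist z y := by
    refine hK.eventually_forall_of_forall_eventually fun y hy => ?_
    have hlt : m < dist x y :=
      (infDist_le_dist_of_mem hy.1.1).lt_of_ne fun h => hy.2 (hPU ⟨hy.1.1, h.symm⟩)
    exact ((continuous_infDist_pt X).comp continuous_fst).continuousAt.eventually_lt
      continuous_dist.continuousAt hlt
  have hnear : ∀ᶠ z in 𝓝 x, dist x z + infDist z X < m + 1 := by
    have hcont : Continuous fun z => dist x z + infDist z X :=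
      (continuous_const.dist continuous_id).add (continuous_infDist_pt X)
    exact hcont.continuousAt.eventually_lt continuousAt_const (by simp [m])
  filter_upwards [hfar, hnear] with z hzK hz y hy
  by_contra hyU
  have hyB : y ∈ closedBall x (m + 1) := by
    rw [mem_closedBall, dist_comm]
    exact ((dist_triangle x z y).trans_eq (by rw [hy.2])).trans hz.le
  exact (hzK y ⟨⟨hy.1, hyB⟩, hyU⟩).ne hy.2.symm

lemma eventually_lt_inner_of_mem_projSet {V : Type*} [NormedAddCommGroup V]
    [InnerProductSpace ℝ V] [ProperSpace V] {X : Set V} (hX : IsClosed X) {x w : V} {a : ℝ}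
    (ha : ∀ y ∈ projSet X x, a < ⟪x - y, w⟫) :
    ∀ᶠ p : V × V in 𝓝 (x, w), ∀ y ∈ projSet X p.1, a < ⟪x - y, p.2⟫ := by
  have hopen : IsOpen {q : V × V | a < ⟪x - q.1, q.2⟫} :=
    isOpen_lt continuous_const ((continuous_const.sub continuous_fst).inner continuous_snd)
  obtain ⟨U, N, hU, hN, hPU, hwN, hUN⟩ := generalized_tube_lemma (isCompact_projSet hX x)
    isCompact_singleton hopen fun q hq => ha q.1 hq.1 |>.trans_eq (by rw [hq.2])
  rw [nhds_prod_eq]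
  filter_upwards [(eventually_projSet_subset hX hU hPU).prod_mk (hN.mem_nhds (hwN rfl))]
    with p ⟨hpU, hpN⟩ y hy using @hUN (y, p.2) ⟨hpU hy, hpN⟩

end NormedSpace

section DifferenceQuotient

variable {V : Type*} [NormedAddCommGroup V] [InnerProductSpace ℝ V] {X : Set V}

lemma norm_add_smul_sub_sq (x y v : V) (t : ℝ) :
    ‖x + t • v - y‖ ^ 2 = ‖x - y‖ ^ 2 + 2 * t * ⟪x - y, v⟫ + t ^ 2 * ‖v‖ ^ 2 := by
  rw [show x + t • v - y = (x - y) + t • v by abel, norm_add_sq_real, real_inner_smul_right,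
    norm_smul, mul_pow, Real.norm_eq_abs, sq_abs]
  ring

lemma infDist_sq_quotient_le {x y : V} (hy : y ∈ projSet X x) {t : ℝ} (ht : 0 < t) (v : V) :
    t⁻¹ * (infDist (x + t • v) X ^ 2 / 2 - infDist x X ^ 2 / 2) ≤
      ⟪x - y, v⟫ + t * ‖v‖ ^ 2 / 2 := by
  have h := sq_infDist_le_of_mem hy.1 (x + t • v)
  rw [norm_add_smul_sub_sq, ← infDist_eq_norm_of_mem_projSet hy] at h
  rw [inv_mul_le_iff₀ ht]
  linarith

lemma inner_le_infDist_sq_quotient {x y : V} {t : ℝ} (ht : 0 < t) (v : V)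
    (hy : y ∈ projSet X (x + t • v)) :
    ⟪x - y, v⟫ ≤ t⁻¹ * (infDist (x + t • v) X ^ 2 / 2 - infDist x X ^ 2 / 2) := by
  have h := sq_infDist_le_of_mem hy.1 x
  rw [le_inv_mul_iff₀ ht, infDist_eq_norm_of_mem_projSet hy, norm_add_smul_sub_sq]
  linarith [mul_nonneg (sq_nonneg t) (sq_nonneg ‖v‖)]

end DifferenceQuotient

/-- For a nonempty closed `X ⊆ ℝⁿ`, the function `q(x) = ½ dist²(x;X)` is semi-differentiable
at every `x`, with semi-derivative `w ↦ min{⟨x − y, w⟩ : y ∈ proj_X(x)}`. -/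
theorem stmt2 {n : ℕ} (X : Set (En n)) (hX : IsClosed X) (hne : X.Nonempty) (x : En n) :
    HasSemiDerivAt (fun z => infDist z X ^ 2 / 2) x
      (fun w => sInf ((fun y => (inner ℝ (x - y) w : ℝ)) '' projSet X x)) := by
  intro w
  dsimp only
  obtain ⟨y₀, hy₀, hmin⟩ := (isCompact_projSet hX x).exists_isMinOn (projSet_nonempty hX hne x)
    (f := fun y => ⟪x - y, w⟫) (by fun_prop)
  rw [IsLeast.csInf_eq ⟨mem_image_of_mem _ hy₀, forall_mem_image.2 fun _ hy => hmin hy⟩]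
  choose Y hY using projSet_nonempty hX hne
  have hpos : ∀ᶠ p : ℝ × En n in 𝓝[>] 0 ×ˢ 𝓝 w, 0 < p.1 :=
    tendsto_fst.eventually self_mem_nhdsWithin
  have hbase : Tendsto (fun p : ℝ × En n => (x + p.1 • p.2, p.2)) (𝓝[>] 0 ×ˢ 𝓝 w) (𝓝 (x, w)) := by
    simpa using (by fun_prop : Continuous fun p : ℝ × En n => (x + p.1 • p.2, p.2))
      |>.tendsto_nhdsGT_zero_prod w
  have hupper : Tendsto (fun p : ℝ × En n => ⟪x - y₀, p.2⟫ + p.1 * ‖p.2‖ ^ 2 / 2)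
      (𝓝[>] 0 ×ˢ 𝓝 w) (𝓝 ⟪x - y₀, w⟫) := by
    simpa using (by fun_prop : Continuous fun p : ℝ × En n => ⟪x - y₀, p.2⟫ + p.1 * ‖p.2‖ ^ 2 / 2)
      |>.tendsto_nhdsGT_zero_prod w
  refine tendsto_order.2 ⟨fun a ha => ?_, fun b hb => ?_⟩
  · have hlower := hbase.eventually
      (eventually_lt_inner_of_mem_projSet hX fun y hy => ha.trans_le (hmin hy))
    filter_upwards [hlower, hpos] with p hp ht
    exact (hp _ (hY _)).trans_le (inner_le_infDist_sq_quotient ht p.2 (hY _))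
  · filter_upwards [hupper.eventually (gt_mem_nhds hb), hpos] with p hp ht
    exact (infDist_sq_quotient_le hy₀ ht p.2).trans_lt hp
end

section
/- Let ‖·‖_* be a norm on ℝⁿ that is Fréchet differentiable on ℝⁿ∖{0}, with gradient ξ(x) at x ≠ 0. Let X ⊆ ℝⁿ be nonempty closed, p(x) := dist_*(x; X) the distance to X in the norm ‖·‖_*, and proj*_X(x) the set of nearest points in that norm. Then for every x ∉ X, the subderivative of p at x is d p(x)(w) = min { ⟨ξ(x − y), w⟩ : y ∈ proj*_X(x) } for all w ∈ ℝⁿ. -/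
open Filter Topology Metric Set

/-- Distance to `X` in the norm `N`. -/
noncomputable def distN {V : Type*} [NormedAddCommGroup V] [NormedSpace ℝ V]
    (N : V → ℝ) (x : V) (X : Set V) : ℝ :=
  sInf ((fun y => N (x - y)) '' X)

/-- Projection set onto `X` in the norm `N`. -/
noncomputable def projN {V : Type*} [NormedAddCommGroup V] [NormedSpace ℝ V]
    (N : V → ℝ) (X : Set V) (x : V) : Set V :=
  {y ∈ X | N (x - y) = distN N x X}

/-!
Write `p z = distN q z X` for a norm `q`. For every nearest point `y` of `x`,
`p (x + t • w) - p x ≤ q (x - y + t • w) - q (x - y)`, which gives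
`d p(x)(w) ≤ ⟪ξ (x - y), w⟫`. Conversely, take `tₖ → 0⁺`, `wₖ → w` and nearest points `yₖ`
of `x + tₖ • wₖ`: the gradient inequality of the convex function `q` at `x - yₖ` gives
`p (x + tₖ • wₖ) - p x ≥ tₖ ⟪ξ (x - yₖ), wₖ⟫`. Since the sublevel sets of the norm `q` are compact,
a subsequence of `yₖ` converges to a nearest point `y` of `x`, and lower semicontinuity of
`(u, v) ↦ ⟪ξ u, v⟫` off `u = 0` bounds the limit below by `⟪ξ (x - y), w⟫`.
-/

open scoped InnerProductSpace

section Subderivative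

variable {V : Type*} [NormedAddCommGroup V] [NormedSpace ℝ V] {f : V → ℝ} {x w : V}

lemma subderiv_le_of_tendsto {g : ℝ → ℝ} {L : ℝ}
    (hle : ∀ᶠ t in 𝓝[>] 0, (f (x + t • w) - f x) / t ≤ g t)
    (hg : Tendsto g (𝓝[>] 0) (𝓝 L)) :
    subderiv f x w ≤ L := by
  refine EReal.le_of_forall_lt_iff_le.1 fun d hd => ?_
  have hray : Tendsto (fun t : ℝ => (t, w)) (𝓝[>] 0) (𝓝[>] 0 ×ˢ 𝓝 w) :=
    tendsto_id.prodMk tendsto_const_nhds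
  refine liminf_le_of_frequently_le' (hray.frequently ?_)
  have hlt := hle.and (hg.eventually (gt_mem_nhds (EReal.coe_lt_coe_iff.1 hd)))
  refine (hlt.mono fun t ht => ?_).frequently
  exact_mod_cast ht.1.trans ht.2.le

lemma le_subderiv_of_forall_seq {d : ℝ}
    (h : ∀ (t : ℕ → ℝ) (v : ℕ → V), (∀ k, 0 < t k) → Tendsto t atTop (𝓝 0) →
      Tendsto v atTop (𝓝 w) → ¬ ∀ k, (f (x + t k • v k) - f x) / t k < d) :
    (d : EReal) ≤ subderiv f x w := by
  refine le_liminf_of_le (by isBoundedDefault) ?_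
  by_contra hcon
  rw [not_eventually] at hcon
  have hpos : ∀ᶠ q : ℝ × V in 𝓝[>] 0 ×ˢ 𝓝 w, 0 < q.1 :=
    tendsto_fst.eventually eventually_mem_nhdsWithin
  obtain ⟨q, hq, hqP⟩ := exists_seq_forall_of_frequently (hcon.and_eventually hpos)
  refine h (fun k => (q k).1) (fun k => (q k).2) (fun k => (hqP k).2)
    ((tendsto_fst.comp hq).mono_right nhdsWithin_le_nhds) (tendsto_snd.comp hq) fun k => ?_
  exact_mod_cast not_le.1 (hqP k).1

end Subderivative

section ConvexGradient

variable {E : Type*} [NormedAddCommGroup E] [InnerProductSpace ℝ E] [CompleteSpace E]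
  {f : E → ℝ} {g z : E}

lemma HasGradientAt.tendsto_slope_right (hg : HasGradientAt f g z) (v : E) :
    Tendsto (fun t : ℝ => (f (z + t • v) - f z) / t) (𝓝[>] 0) (𝓝 ⟪g, v⟫_ℝ) := by
  have := (hg.hasFDerivAt.hasLineDerivAt v).tendsto_slope_zero_right
  simpa [div_eq_inv_mul] using this

lemma ConvexOn.add_inner_le_of_hasGradientAt (hf : ConvexOn ℝ univ f)
    (hg : HasGradientAt f g z) (v : E) : f z + ⟪g, v⟫_ℝ ≤ f (z + v) := by
  have hslope : ∀ t ∈ Ioo (0 : ℝ) 1, (f (z + t • v) - f z) / t ≤ f (z + v) - f z := by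
    rintro t ⟨ht0, ht1⟩
    have hconv := hf.2 (mem_univ z) (mem_univ (z + v)) (sub_nonneg.2 ht1.le) ht0.le
      (sub_add_cancel 1 t)
    rw [div_le_iff₀ ht0]
    have hpt : (1 - t) • z + t • (z + v) = z + t • v := by
      rw [smul_add, sub_smul, one_smul]; abel
    rw [hpt, smul_eq_mul, smul_eq_mul] at hconv
    linarith
  have := le_of_tendsto (hg.tendsto_slope_right v)
    (mem_of_superset (Ioo_mem_nhdsGT one_pos) hslope)
  linarith

/-- `⟪ξ u, v⟫` dominates the difference quotients `(f u - f (u - s • v)) / s`, which are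
continuous in `(u, v)` and tend to it as `s → 0⁺`; this replaces continuity of the gradient. -/
lemma ConvexOn.lowerSemicontinuousAt_inner_gradient (hf : ConvexOn ℝ univ f)
    (hfc : Continuous f) {ξ : E → E} {u v : E} (hξ : ∀ᶠ u' in 𝓝 u, HasGradientAt f (ξ u') u') :
    LowerSemicontinuousAt (fun p : E × E => ⟪ξ p.1, p.2⟫_ℝ) (u, v) := by
  intro d hd
  have hslope : Tendsto (fun s : ℝ => (f u - f (u - s • v)) / s) (𝓝[>] 0) (𝓝 ⟪ξ u, v⟫_ℝ) := by
    have := (hξ.self_of_nhds.tendsto_slope_right (-v)).neg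
    simpa only [inner_neg_right, neg_neg, smul_neg, ← sub_eq_add_neg, ← neg_div, neg_sub]
      using this
  obtain ⟨s, hds, hs⟩ := ((hslope.eventually (lt_mem_nhds hd)).and self_mem_nhdsWithin).exists
  have hcont : Continuous fun p : E × E => (f p.1 - f (p.1 - s • p.2)) / s := by fun_prop
  filter_upwards [hcont.continuousAt.eventually (lt_mem_nhds hds),
    (continuous_fst.tendsto (u, v)).eventually hξ] with p hdp hgp
  refine hdp.trans_le ?_
  have := hf.add_inner_le_of_hasGradientAt hgp (-(s • p.2))
  rw [inner_neg_right, inner_smul_right, ← sub_eq_add_neg, ← sub_eq_add_neg] at this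
  rw [div_le_iff₀ hs]
  linarith

end ConvexGradient

section SeminormDistance

variable {E : Type*} [NormedAddCommGroup E] [NormedSpace ℝ E] (q : Seminorm ℝ E) {X : Set E}

lemma Seminorm.continuous_of_finiteDimensional [FiniteDimensional ℝ E] : Continuous q :=
  continuousOn_univ.1 (q.convexOn.continuousOn isOpen_univ)

lemma Seminorm.exists_pos_mul_norm_le [FiniteDimensional ℝ E] (hq : ∀ z, q z = 0 → z = 0) :
    ∃ m > 0, ∀ z, m * ‖z‖ ≤ q z := by
  have hpos : ∀ z ∈ sphere (0 : E) 1, 0 < q z := fun z hz =>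
    (apply_nonneg q z).lt_of_ne' fun h => by simp [hq z h] at hz
  obtain ⟨m, hm, hmq⟩ := (isCompact_sphere (0 : E) 1).exists_forall_le'
    q.continuous_of_finiteDimensional.continuousOn hpos
  refine ⟨m, hm, fun z => ?_⟩
  rcases eq_or_ne z 0 with rfl | hz
  · simp
  have := hmq (‖z‖⁻¹ • z) (by simp [norm_smul, hz])
  rw [map_smul_eq_mul, norm_inv, norm_norm, le_inv_mul_iff₀ (norm_pos_iff.2 hz)] at this
  linarith

lemma Seminorm.isCompact_setOf_apply_sub_le [FiniteDimensional ℝ E] (hq : ∀ z, q z = 0 → z = 0)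
    (x : E) (r : ℝ) : IsCompact {y | q (x - y) ≤ r} := by
  obtain ⟨m, hm, hmq⟩ := q.exists_pos_mul_norm_le hq
  have hqc := q.continuous_of_finiteDimensional
  refine Metric.isCompact_of_isClosed_isBounded (isClosed_le (by fun_prop) continuous_const)
    ((isBounded_closedBall (x := x) (r := r / m)).subset fun y (hy : q (x - y) ≤ r) => ?_)
  rw [Metric.mem_closedBall, dist_comm, dist_eq_norm, le_div_iff₀ hm]
  linarith [hmq (x - y)]

lemma distN_le {z y : E} (hy : y ∈ X) : distN q z X ≤ q (z - y) :=
  csInf_le ⟨0, forall_mem_image.2 fun _ _ => apply_nonneg q _⟩ (mem_image_of_mem _ hy)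

lemma distN_le_add (hne : X.Nonempty) (a b : E) : distN q a X ≤ distN q b X + q (a - b) := by
  suffices distN q a X - q (a - b) ≤ distN q b X by linarith
  refine le_csInf (hne.image _) (forall_mem_image.2 fun y hy => ?_)
  have := map_add_le_add q (a - b) (b - y)
  rw [sub_add_sub_cancel] at this
  linarith [distN_le q (z := a) hy]

lemma continuous_distN [FiniteDimensional ℝ E] (hne : X.Nonempty) :
    Continuous fun z => distN q z X := by
  have hqc := q.continuous_of_finiteDimensional
  refine continuous_iff_continuousAt.2 fun a => ?_
  have h0 : Tendsto (fun z => q (z - a)) (𝓝 a) (𝓝 0) := by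
    simpa [Function.comp_def] using (hqc.tendsto (a - a)).comp (tendsto_id.sub_const a)
  refine tendsto_of_tendsto_of_tendsto_of_le_of_le (by simpa using tendsto_const_nhds.sub h0)
    (by simpa using tendsto_const_nhds.add h0) (fun z => ?_) fun z => distN_le_add q hne z a
  have := distN_le_add q hne a z
  rw [map_sub_rev] at this
  simp only
  linarith

lemma projN_nonempty [FiniteDimensional ℝ E] (hq : ∀ z, q z = 0 → z = 0) (hX : IsClosed X)
    (hne : X.Nonempty) (z : E) : (projN q X z).Nonempty := by
  have ⟨y₀, hy₀⟩ := hne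
  have hqc := q.continuous_of_finiteDimensional
  have hy₀K : y₀ ∈ X ∩ {y | q (z - y) ≤ q (z - y₀)} := ⟨hy₀, le_refl (q (z - y₀))⟩
  obtain ⟨y, ⟨hyX, -⟩, hmin⟩ :=
    ((q.isCompact_setOf_apply_sub_le hq z _).inter_left hX).exists_isMinOn ⟨y₀, hy₀K⟩
      (by fun_prop : Continuous fun y => q (z - y)).continuousOn
  have hle : ∀ y' ∈ X, q (z - y) ≤ q (z - y') := fun y' hy' =>
    (le_total (q (z - y')) (q (z - y₀))).elim (fun h => hmin ⟨hy', h⟩) ((hmin hy₀K).trans)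
  exact ⟨y, hyX, le_antisymm (le_csInf (hne.image _) (forall_mem_image.2 hle)) (distN_le q hyX)⟩

lemma exists_subseq_tendsto_mem_projN [FiniteDimensional ℝ E] (hq : ∀ z, q z = 0 → z = 0)
    (hX : IsClosed X) (hne : X.Nonempty) {x : E} {z y : ℕ → E}
    (hz : Tendsto z atTop (𝓝 x)) (hy : ∀ k, y k ∈ projN q X (z k)) :
    ∃ y₀ ∈ projN q X x, ∃ φ : ℕ → ℕ, StrictMono φ ∧ Tendsto (y ∘ φ) atTop (𝓝 y₀) := by
  have hqc := q.continuous_of_finiteDimensional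
  have hdist : Tendsto (fun k => q (z k - y k)) atTop (𝓝 (distN q x X)) :=
    (((continuous_distN q hne).tendsto x).comp hz).congr fun k => (hy k).2.symm
  have hzx : Tendsto (fun k => q (x - z k)) atTop (𝓝 0) := by
    simpa [Function.comp_def] using (hqc.tendsto (x - x)).comp (tendsto_const_nhds.sub hz)
  obtain ⟨A, hA⟩ := (hzx.add hdist).bddAbove_range
  have hbound : ∀ k, y k ∈ {y' | q (x - y') ≤ A} := fun k => by
    have := map_add_le_add q (x - z k) (z k - y k)
    rw [sub_add_sub_cancel] at this
    exact this.trans (hA ⟨k, rfl⟩)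
  obtain ⟨y₀, -, φ, hφ, hlim⟩ := (q.isCompact_setOf_apply_sub_le hq x A).tendsto_subseq hbound
  refine ⟨y₀, ⟨hX.mem_of_tendsto hlim (Eventually.of_forall fun k => (hy (φ k)).1), ?_⟩,
    φ, hφ, hlim⟩
  exact tendsto_nhds_unique ((hqc.tendsto _).comp ((hz.comp hφ.tendsto_atTop).sub hlim))
    (hdist.comp hφ.tendsto_atTop)

end SeminormDistance

section SubderivDistance

variable {E : Type*} [NormedAddCommGroup E] [InnerProductSpace ℝ E] [FiniteDimensional ℝ E]
  (q : Seminorm ℝ E) {ξ : E → E} {X : Set E} {x w : E}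

lemma exists_mem_projN_inner_le_of_slope_lt (hq : ∀ z, q z = 0 → z = 0)
    (hξ : ∀ z, z ≠ 0 → HasGradientAt q (ξ z) z) (hX : IsClosed X) (hne : X.Nonempty) (hx : x ∉ X)
    {t : ℕ → ℝ} {v : ℕ → E} (ht0 : ∀ k, 0 < t k) (ht : Tendsto t atTop (𝓝 0))
    (hv : Tendsto v atTop (𝓝 w)) {d : ℝ}
    (hd : ∀ k, (distN q (x + t k • v k) X - distN q x X) / t k < d) :
    ∃ y ∈ projN q X x, ⟪ξ (x - y), w⟫_ℝ ≤ d := by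
  have hsub : ∀ y ∈ X, x - y ≠ 0 := fun y hy h => hx (sub_eq_zero.1 h ▸ hy)
  choose y hy using fun k => projN_nonempty q hq hX hne (x + t k • v k)
  have hz : Tendsto (fun k => x + t k • v k) atTop (𝓝 x) := by
    simpa using tendsto_const_nhds.add (ht.smul hv)
  obtain ⟨y₀, hy₀, φ, hφ, hlim⟩ := exists_subseq_tendsto_mem_projN q hq hX hne hz hy
  have hinner : ∀ k, ⟪ξ (x - y k), v k⟫_ℝ < d := fun k => by
    have hgrad := q.convexOn.add_inner_le_of_hasGradientAt (hξ _ (hsub _ (hy k).1)) (t k • v k)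
    rw [inner_smul_right, show x - y k + t k • v k = x + t k • v k - y k by abel, (hy k).2]
      at hgrad
    have hslope := hd k
    rw [div_lt_iff₀ (ht0 k)] at hslope
    refine lt_of_mul_lt_mul_left ?_ (ht0 k).le
    linarith [distN_le q (z := x) (hy k).1]
  refine ⟨y₀, hy₀, not_lt.1 fun hlt => ?_⟩
  have hlsc := q.convexOn.lowerSemicontinuousAt_inner_gradient q.continuous_of_finiteDimensional
    (v := w) ((eventually_ne_nhds (hsub y₀ hy₀.1)).mono hξ)
  obtain ⟨k, hk⟩ := (((tendsto_const_nhds.sub hlim).prodMk_nhds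
    (hv.comp hφ.tendsto_atTop)).eventually (hlsc d hlt)).exists
  exact (hinner (φ k)).not_gt hk

theorem subderiv_distN (hq : ∀ z, q z = 0 → z = 0) (hξ : ∀ z, z ≠ 0 → HasGradientAt q (ξ z) z)
    (hX : IsClosed X) (hne : X.Nonempty) (hx : x ∉ X) (w : E) :
    subderiv (fun z => distN q z X) x w =
      ((sInf ((fun y => ⟪ξ (x - y), w⟫_ℝ) '' projN q X x) : ℝ) : EReal) := by
  set S := (fun y => ⟪ξ (x - y), w⟫_ℝ) '' projN q X x
  have hsub : ∀ y ∈ X, x - y ≠ 0 := fun y hy h => hx (sub_eq_zero.1 h ▸ hy)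
  have hSbdd : BddBelow S := ⟨-q w, forall_mem_image.2 fun y hy => by
    have := q.convexOn.add_inner_le_of_hasGradientAt (hξ _ (hsub y hy.1)) (-w)
    rw [inner_neg_right, ← sub_eq_add_neg, ← sub_eq_add_neg] at this
    linarith [map_sub_le_add q (x - y) w]⟩
  refine le_antisymm (EReal.le_of_forall_lt_iff_le.1 fun d hd => ?_)
    (EReal.ge_of_forall_gt_iff_ge.1 fun d hd => le_subderiv_of_forall_seq ?_)
  · obtain ⟨_, ⟨y, hy, rfl⟩, hyd⟩ :=
      exists_lt_of_csInf_lt ((projN_nonempty q hq hX hne x).image _) (EReal.coe_lt_coe_iff.1 hd)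
    refine (subderiv_le_of_tendsto ?_ ((hξ _ (hsub y hy.1)).tendsto_slope_right w)).trans
      (EReal.coe_le_coe_iff.2 hyd.le)
    filter_upwards [self_mem_nhdsWithin] with t (ht : 0 < t)
    rw [← hy.2, show x - y + t • w = x + t • w - y by abel]
    gcongr
    exact distN_le q hy.1
  · intro t v ht0 ht hv hlt
    obtain ⟨y, hy, hyd⟩ := exists_mem_projN_inner_le_of_slope_lt q hq hξ hX hne hx ht0 ht hv hlt
    exact ((csInf_le hSbdd ⟨y, hy, rfl⟩).trans hyd).not_gt (EReal.coe_lt_coe_iff.1 hd)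

end SubderivDistance

/-- For a Fréchet smooth norm `‖·‖_* = N` with gradient `ξ` off the origin, a nonempty closed
set `X`, and `x ∉ X`, the subderivative of `p = dist_*(·;X)` at `x` is
`d p(x)(w) = min{⟨ξ(x − y), w⟩ : y ∈ proj*_X(x)}`. -/
theorem stmt6 {n : ℕ} (N : En n → ℝ)
    (hN0 : ∀ z, N z = 0 ↔ z = 0)
    (hNsmul : ∀ (a : ℝ) z, N (a • z) = |a| * N z)
    (hNadd : ∀ z₁ z₂, N (z₁ + z₂) ≤ N z₁ + N z₂)
    (ξ : En n → En n) (hξ : ∀ z, z ≠ 0 → HasGradientAt N (ξ z) z)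
    (X : Set (En n)) (hX : IsClosed X) (hne : X.Nonempty)
    (x : En n) (hx : x ∉ X) :
    ∀ w, subderiv (fun z => distN N z X) x w =
      ((sInf ((fun y => (inner ℝ (ξ (x - y)) w : ℝ)) '' projN N X x) : ℝ) : EReal) :=
  subderiv_distN (Seminorm.of N hNadd fun a z => by rw [Real.norm_eq_abs, hNsmul])
    (fun z => (hN0 z).1) hξ hX hne hx
end

section
/- Let ‖·‖_* be a norm on ℝⁿ that is Fréchet differentiable on ℝⁿ∖{0}, X ⊆ ℝⁿ nonempty closed, and p(x) := dist_*(x; X). Then for x ∈ X, the set X is geometrically derivable at x if and only if p is semi-differentiable at x. Consequently, p is semi-differentiable on all of ℝⁿ if and only if X is geometrically derivable at every point of X. -/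
/-!
Write `p = dist_N(·, X)` and let `Y` pick a nearest point of `X`. Then
`t⁻¹ p(x + t v) = N(v - t⁻¹ (Y(x + t v) - x))` for `x ∈ X`, and the quotients
`t⁻¹ (Y(x + t v) - x)` are bounded, with all their cluster points tangent to `X` at `x`. A curve
realising a tangent vector `u` bounds the difference quotients of `p` by `N(w - u)` in the limit,
so geometric derivability forces `p'(x; w) = dist_N(w, T_X(x))`. Conversely, a semi-derivative of
`p` vanishes on `T_X(x)`, so `t ↦ Y(x + t w)` is a curve realising `w`.

Off `X`, convexity of `N` squeezes the difference quotients of `p` between left slopes of `N`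
at `x - y` for nearby nearest points `y` and right slopes at `x - y₀` for the nearest points
`y₀` of `x`; differentiability of `N` away from `0` makes both sides converge, and `p'(x; w)`
is the least of the directional derivatives `N'(x - y₀) w`.
-/

open Filter Topology Metric Set

/-- Geometric derivability at a point: every tangent vector is realized by a curve in `X`
emanating from `x` with prescribed right derivative. -/
def geomDerivableAt {V : Type*} [NormedAddCommGroup V] [NormedSpace ℝ V]
    (X : Set V) (x : V) : Prop :=
  ∀ w ∈ tanCone X x, ∃ ε > (0:ℝ), ∃ ζ : ℝ → V, (∀ t ∈ Set.Icc (0:ℝ) ε, ζ t ∈ X) ∧ ζ 0 = x ∧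
    Filter.Tendsto (fun t => t⁻¹ • (ζ t - x)) (𝓝[>] (0:ℝ)) (𝓝 w)

structure IsNorm {V : Type*} [AddCommGroup V] [Module ℝ V] (N : V → ℝ) : Prop where
  eq_zero_iff : ∀ z, N z = 0 ↔ z = 0
  map_smul : ∀ (a : ℝ) z, N (a • z) = |a| * N z
  add_le : ∀ z₁ z₂, N (z₁ + z₂) ≤ N z₁ + N z₂

theorem inv_smul_add_smul_sub {V : Type*} [AddCommGroup V] [Module ℝ V] {t : ℝ} (ht : t ≠ 0)
    (x v y : V) : t⁻¹ • (x + t • v - y) = v - t⁻¹ • (y - x) := by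
  rw [smul_sub, smul_add, smul_smul, inv_mul_cancel₀ ht, one_smul, smul_sub]
  abel

section SemiDeriv

variable {V W : Type*} [NormedAddCommGroup V] [NormedSpace ℝ V] [NormedAddCommGroup W]
  [NormedSpace ℝ W] {F : V → W} {x : V} {g : V → W}

theorem HasSemiDerivAt.tendsto_slope (hg : HasSemiDerivAt F x g) (w : V) :
    Tendsto (fun t : ℝ => t⁻¹ • (F (x + t • w) - F x)) (𝓝[>] 0) (𝓝 (g w)) :=
  (hg w).comp (tendsto_id.prodMk tendsto_const_nhds)

theorem HasSemiDerivAt.tendsto_seq (hg : HasSemiDerivAt F x g) {t : ℕ → ℝ} {v : ℕ → V}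
    {w : V} (ht : ∀ k, 0 < t k) (ht0 : Tendsto t atTop (𝓝 0)) (hv : Tendsto v atTop (𝓝 w)) :
    Tendsto (fun k => (t k)⁻¹ • (F (x + t k • v k) - F x)) atTop (𝓝 (g w)) :=
  (hg w).comp ((tendsto_nhdsWithin_iff.2 ⟨ht0, .of_forall ht⟩).prodMk hv)

theorem hasSemiDerivAt_of_subseq
    (h : ∀ (w : V) (t : ℕ → ℝ) (v : ℕ → V), (∀ k, 0 < t k) →
      Tendsto t atTop (𝓝 0) → Tendsto v atTop (𝓝 w) → ∃ φ : ℕ → ℕ, Tendsto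
        (fun k => (t (φ k))⁻¹ • (F (x + t (φ k) • v (φ k)) - F x)) atTop (𝓝 (g w))) :
    HasSemiDerivAt F x g := by
  intro w
  refine tendsto_iff_seq_tendsto.2 fun u hu => tendsto_of_subseq_tendsto fun ns hns => ?_
  have hu' := hu.comp hns
  have ht : Tendsto (fun k => (u (ns k)).1) atTop (𝓝[>] 0) := tendsto_fst.comp hu'
  obtain ⟨φ, hφ, hpos⟩ := extraction_of_eventually_atTop (ht self_mem_nhdsWithin)
  obtain ⟨ψ, hlim⟩ := h w (fun k => (u (ns (φ k))).1) (fun k => (u (ns (φ k))).2) hpos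
    ((ht.mono_right nhdsWithin_le_nhds).comp hφ.tendsto_atTop)
    ((tendsto_snd.comp hu').comp hφ.tendsto_atTop)
  exact ⟨φ ∘ ψ, hlim⟩

theorem HasFDerivAt.hasSemiDerivAt {F' : V →L[ℝ] W} (hF : HasFDerivAt F F' x) :
    HasSemiDerivAt F x F' := by
  intro w
  have hpos : ∀ᶠ p : ℝ × V in 𝓝[>] 0 ×ˢ 𝓝 w, 0 < p.1 :=
    tendsto_fst.eventually self_mem_nhdsWithin
  refine (hF.hasFDerivWithinAt (s := univ)).lim ?_ (.of_forall fun _ => mem_univ _) ?_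
  · simpa using ((tendsto_fst.mono_right nhdsWithin_le_nhds).smul tendsto_snd :
      Tendsto (fun p : ℝ × V => p.1 • p.2) (𝓝[>] 0 ×ˢ 𝓝 w) (𝓝 ((0 : ℝ) • w)))
  · refine tendsto_snd.congr' ?_
    filter_upwards [hpos] with p hp
    rw [smul_smul, inv_mul_cancel₀ hp.ne', one_smul]

theorem HasSemiDerivAt.eq_zero_of_mem_tanCone {X : Set V} (hF : ∀ y ∈ X, F y = 0)
    (hx : x ∈ X) (hg : HasSemiDerivAt F x g) {w : V} (hw : w ∈ tanCone X x) : g w = 0 := by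
  obtain ⟨t, v, ht, ht0, hv, hmem⟩ := hw
  refine tendsto_nhds_unique (hg.tendsto_seq ht ht0 hv) (tendsto_const_nhds.congr fun k => ?_)
  simp [hF _ hx, hF _ (hmem k)]

end SemiDeriv

theorem le_distN {V : Type*} [NormedAddCommGroup V] [NormedSpace ℝ V] {N : V → ℝ}
    {X : Set V} {x : V} (hne : X.Nonempty) {r : ℝ} (h : ∀ y ∈ X, r ≤ N (x - y)) :
    r ≤ distN N x X :=
  le_csInf (hne.image _) (by rintro _ ⟨y, hy, rfl⟩; exact h y hy)

namespace IsNorm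

variable {V : Type*} [NormedAddCommGroup V] [NormedSpace ℝ V] {N : V → ℝ} {X : Set V} {x : V}
  (hN : IsNorm N)
include hN

theorem map_zero : N 0 = 0 := (hN.eq_zero_iff 0).2 rfl

theorem map_neg (z : V) : N (-z) = N z := by
  simpa using hN.map_smul (-1) z

theorem map_sub_rev (a b : V) : N (a - b) = N (b - a) := by
  rw [← neg_sub, hN.map_neg]

theorem nonneg (z : V) : 0 ≤ N z := by
  have h := hN.add_le z (-z)
  rw [add_neg_cancel, hN.map_zero, hN.map_neg] at h
  linarith

theorem map_smul_of_pos {a : ℝ} (ha : 0 < a) (z : V) : N (a • z) = a * N z := by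
  rw [hN.map_smul, abs_of_pos ha]

theorem convexOn : ConvexOn ℝ univ N :=
  ⟨convex_univ, fun x _ y _ a b ha hb _ => by
    simpa [hN.map_smul, abs_of_nonneg ha, abs_of_nonneg hb] using hN.add_le (a • x) (b • y)⟩

theorem slope_le_slope (b u : V) {s t : ℝ} (hs : 0 < s) (ht : 0 < t) :
    s⁻¹ * (N b - N (b - s • u)) ≤ t⁻¹ * (N (b + t • u) - N b) := by
  have h := hN.add_le (s • (b + t • u)) (t • (b - s • u))
  rw [hN.map_smul_of_pos hs, hN.map_smul_of_pos ht,
    show s • (b + t • u) + t • (b - s • u) = (s + t) • b by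
      simp only [smul_add, smul_sub, smul_smul, add_smul]; rw [mul_comm t s]; abel,
    hN.map_smul_of_pos (by positivity)] at h
  rw [inv_mul_le_iff₀ hs, mul_left_comm, le_inv_mul_iff₀ ht]
  linarith

theorem distN_le {y : V} (hy : y ∈ X) : distN N x X ≤ N (x - y) :=
  csInf_le ⟨0, by rintro _ ⟨z, -, rfl⟩; exact hN.nonneg _⟩ ⟨y, hy, rfl⟩

theorem distN_eq_zero_of_mem (hx : x ∈ X) : distN N x X = 0 :=
  le_antisymm (by simpa [hN.map_zero] using hN.distN_le (x := x) hx)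
    (le_distN ⟨x, hx⟩ fun _ _ => hN.nonneg _)

theorem inv_mul_distN_le {t : ℝ} (ht : 0 < t) (v : V) {y : V} (hy : y ∈ X) :
    t⁻¹ * distN N (x + t • v) X ≤ N (v - t⁻¹ • (y - x)) := by
  rw [← inv_smul_add_smul_sub ht.ne', hN.map_smul_of_pos (inv_pos.2 ht)]
  exact mul_le_mul_of_nonneg_left (hN.distN_le hy) (inv_nonneg.2 ht.le)

theorem slope_distN_le {t : ℝ} (ht : 0 < t) (v : V) {y : V} (hy : y ∈ X)
    (hxy : N (x - y) = distN N x X) :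
    t⁻¹ * (distN N (x + t • v) X - distN N x X) ≤
      t⁻¹ * (N (x - y + t • v) - N (x - y)) := by
  rw [hxy, sub_add_eq_add_sub]
  gcongr
  exact hN.distN_le hy

variable [FiniteDimensional ℝ V]

theorem continuous : Continuous N :=
  continuousOn_univ.1 (hN.convexOn.continuousOn isOpen_univ)

theorem exists_pos_mul_norm_le : ∃ c > 0, ∀ z, c * ‖z‖ ≤ N z := by
  rcases subsingleton_or_nontrivial V with hV | hV
  · exact ⟨1, one_pos, fun z => by simp [Subsingleton.elim z 0, hN.map_zero]⟩
  obtain ⟨z₀, hz₀, hmin⟩ := (isCompact_sphere (0 : V) 1).exists_isMinOn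
    (NormedSpace.sphere_nonempty.2 zero_le_one) hN.continuous.continuousOn
  have hz₀0 : z₀ ≠ 0 := ne_zero_of_mem_unit_sphere ⟨z₀, hz₀⟩
  refine ⟨N z₀, (hN.nonneg z₀).lt_of_ne' (mt (hN.eq_zero_iff z₀).1 hz₀0), fun z => ?_⟩
  rcases eq_or_ne z 0 with rfl | hz
  · simp [hN.map_zero]
  have hpos : 0 < ‖z‖ := norm_pos_iff.2 hz
  have h := hmin (show ‖z‖⁻¹ • z ∈ sphere (0 : V) 1 by
    simp [norm_smul, hpos.ne'])
  rw [mem_ofPred_eq, hN.map_smul_of_pos (inv_pos.2 hpos), le_inv_mul_iff₀ hpos] at h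
  rwa [mul_comm]

theorem tendsto_zero_of_apply_tendsto_zero {α : Type*} {l : Filter α} {f : α → V}
    (hf : Tendsto (fun a => N (f a)) l (𝓝 0)) : Tendsto f l (𝓝 0) := by
  obtain ⟨c, hc, hcN⟩ := hN.exists_pos_mul_norm_le
  refine squeeze_zero_norm (fun a => ?_) (by simpa using hf.const_mul c⁻¹)
  rw [le_inv_mul_iff₀ hc]
  exact hcN (f a)

theorem exists_subseq_tendsto_of_le {a b : ℕ → V} {b₀ : V} (hb : Tendsto b atTop (𝓝 b₀))
    (hab : ∀ k, N (a k) ≤ N (b k)) :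
    ∃ a₀, ∃ φ : ℕ → ℕ, StrictMono φ ∧ Tendsto (a ∘ φ) atTop (𝓝 a₀) := by
  obtain ⟨c, hc, hcN⟩ := hN.exists_pos_mul_norm_le
  obtain ⟨R, hR⟩ := ((hN.continuous.tendsto b₀).comp hb).bddAbove_range
  have ha : ∀ k, a k ∈ closedBall (0 : V) (R / c) := fun k => by
    rw [mem_closedBall_zero_iff, le_div_iff₀' hc]
    exact (hcN _).trans ((hab k).trans (hR ⟨k, rfl⟩))
  obtain ⟨a₀, -, φ, hφ, hlim⟩ := tendsto_subseq_of_bounded isBounded_closedBall ha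
  exact ⟨a₀, φ, hφ, hlim⟩

theorem exists_distN_eq (hX : IsClosed X) (hne : X.Nonempty) (x : V) :
    ∃ y ∈ X, distN N x X = N (x - y) := by
  obtain ⟨c, hc, hcN⟩ := hN.exists_pos_mul_norm_le
  obtain ⟨y₀, hy₀⟩ := hne
  have hcoercive : ∀ᶠ y in cocompact V ⊓ 𝓟 X, N (x - y₀) ≤ N (x - y) := by
    refine mem_inf_of_left (mem_cocompact'.2 ⟨closedBall x (N (x - y₀) / c),
      isCompact_closedBall _ _, fun y hy => ?_⟩)
    rw [mem_closedBall, dist_eq_norm_sub', le_div_iff₀' hc]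
    exact (hcN _).trans (le_of_lt (not_le.1 hy))
  obtain ⟨y, hy, hmin⟩ :=
    (hN.continuous.comp (continuous_sub_left x)).continuousOn.exists_isMinOn' hX hy₀ hcoercive
  exact ⟨y, hy, le_antisymm (hN.distN_le hy) (le_distN ⟨y₀, hy₀⟩ hmin)⟩

theorem eventually_lt_slope {b w : V} (hb : DifferentiableAt ℝ N b) {t : ℕ → ℝ}
    (ht : ∀ k, 0 < t k) {b' v : ℕ → V} (hb' : Tendsto b' atTop (𝓝 b))
    (hv : Tendsto v atTop (𝓝 w)) {L : ℝ} (hL : L < fderiv ℝ N b w) :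
    ∀ᶠ k in atTop, L < (t k)⁻¹ * (N (b' k + t k • v k) - N (b' k)) := by
  have hleft : Tendsto (fun s : ℝ => s⁻¹ * (N b - N (b - s • w))) (𝓝[>] 0)
      (𝓝 (fderiv ℝ N b w)) := by
    simpa [smul_neg, ← sub_eq_add_neg, mul_sub] using
      (hb.hasFDerivAt.hasSemiDerivAt.tendsto_slope (-w)).neg
  obtain ⟨s, hLs, hs⟩ := ((hleft.eventually (lt_mem_nhds hL)).and self_mem_nhdsWithin).exists
  have hcont : Tendsto (fun k => s⁻¹ * (N (b' k) - N (b' k - s • v k))) atTop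
      (𝓝 (s⁻¹ * (N b - N (b - s • w)))) :=
    (((hN.continuous.tendsto _).comp hb').sub
      ((hN.continuous.tendsto _).comp (hb'.sub (hv.const_smul s)))).const_mul _
  filter_upwards [hcont.eventually (lt_mem_nhds hLs)] with k hk
  exact hk.trans_le (hN.slope_le_slope _ _ hs (ht k))

theorem geomDerivableAt_of_hasSemiDerivAt_distN (hX : IsClosed X) (hx : x ∈ X)
    {g : V → ℝ} (hg : HasSemiDerivAt (fun z => distN N z X) x g) : geomDerivableAt X x := by
  choose Y hYX hY using hN.exists_distN_eq hX ⟨x, hx⟩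
  have hYx : Y x = x := by
    have h := hY x
    rwa [hN.distN_eq_zero_of_mem hx, eq_comm, hN.eq_zero_iff, sub_eq_zero, eq_comm] at h
  intro w hw
  refine ⟨1, one_pos, fun t => Y (x + t • w), fun t _ => hYX _, by simpa using hYx, ?_⟩
  have hslope := hg.tendsto_slope w
  rw [hg.eq_zero_of_mem_tanCone (fun y hy => hN.distN_eq_zero_of_mem hy) hx hw] at hslope
  refine tendsto_sub_nhds_zero_iff.1 (hN.tendsto_zero_of_apply_tendsto_zero (hslope.congr' ?_))
  filter_upwards [self_mem_nhdsWithin] with t (ht : 0 < t)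
  rw [hN.distN_eq_zero_of_mem hx, sub_zero, hY, smul_eq_mul,
    ← hN.map_smul_of_pos (inv_pos.2 ht), inv_smul_add_smul_sub ht.ne', hN.map_sub_rev]

theorem hasSemiDerivAt_distN_of_geomDerivableAt (hX : IsClosed X) (hx : x ∈ X)
    (hgeom : geomDerivableAt X x) :
    HasSemiDerivAt (fun z => distN N z X) x (fun w => distN N w (tanCone X x)) := by
  choose Y hYX hY using hN.exists_distN_eq hX ⟨x, hx⟩
  refine hasSemiDerivAt_of_subseq fun w t v ht ht0 hv => ?_
  set e : ℕ → V := fun k => (t k)⁻¹ • (Y (x + t k • v k) - x)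
  have hquot : ∀ k, (t k)⁻¹ • (distN N (x + t k • v k) X - distN N x X) =
      (t k)⁻¹ * distN N (x + t k • v k) X := fun k => by
    rw [hN.distN_eq_zero_of_mem hx, sub_zero, smul_eq_mul]
  have hnearest : ∀ k, (t k)⁻¹ * distN N (x + t k • v k) X = N (v k - e k) := fun k => by
    rw [hY, ← hN.map_smul_of_pos (inv_pos.2 (ht k)), inv_smul_add_smul_sub (ht k).ne']
  have hbound : ∀ k, N (v k - e k) ≤ N (v k) := fun k => by
    simpa [← hnearest] using hN.inv_mul_distN_le (x := x) (ht k) (v k) hx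
  obtain ⟨d, φ, hφ, hd⟩ := hN.exists_subseq_tendsto_of_le hv hbound
  have htφ : Tendsto (fun k => t (φ k)) atTop (𝓝 0) := ht0.comp hφ.tendsto_atTop
  have hvφ : Tendsto (fun k => v (φ k)) atTop (𝓝 w) := hv.comp hφ.tendsto_atTop
  have hlim : Tendsto (fun k => N (v (φ k) - e (φ k))) atTop (𝓝 (N d)) :=
    (hN.continuous.tendsto d).comp hd
  have hmem : w - d ∈ tanCone X x := by
    refine ⟨fun k => t (φ k), fun k => e (φ k), fun k => ht _, htφ,
      by simpa using hvφ.sub hd, fun k => ?_⟩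
    simpa [e, smul_smul, mul_inv_cancel₀ (ht (φ k)).ne'] using hYX _
  have hd_eq : N d = distN N w (tanCone X x) := by
    refine le_antisymm (le_distN ⟨_, hmem⟩ fun u hu => ?_)
      (by simpa using hN.distN_le (x := w) hmem)
    obtain ⟨ε, hε, ζ, hζX, -, hζ⟩ := hgeom u hu
    have hζφ := hζ.comp (tendsto_nhdsWithin_iff.2 ⟨htφ, .of_forall fun k => ht (φ k)⟩)
    refine le_of_tendsto_of_tendsto hlim ((hN.continuous.tendsto _).comp (hvφ.sub hζφ)) ?_
    filter_upwards [htφ.eventually (eventually_le_nhds hε)] with k hk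
    rw [← hnearest]
    exact hN.inv_mul_distN_le (ht (φ k)) (v (φ k)) (hζX _ ⟨(ht _).le, hk⟩)
  refine ⟨φ, hd_eq ▸ hlim.congr fun k => ?_⟩
  rw [hquot, hnearest]

theorem tendsto_slope_distN {y₀ : V} (hy₀ : y₀ ∈ X) (hxy₀ : N (x - y₀) = distN N x X)
    (hd : DifferentiableAt ℝ N (x - y₀)) {t : ℕ → ℝ}
    {v y : ℕ → V} {w : V} (ht : ∀ k, 0 < t k) (ht0 : Tendsto t atTop (𝓝 0))
    (hv : Tendsto v atTop (𝓝 w)) (hyX : ∀ k, y k ∈ X)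
    (hy : ∀ k, distN N (x + t k • v k) X = N (x + t k • v k - y k))
    (hylim : Tendsto y atTop (𝓝 y₀)) :
    Tendsto (fun k => (t k)⁻¹ * (distN N (x + t k • v k) X - distN N x X)) atTop
      (𝓝 (fderiv ℝ N (x - y₀) w)) := by
  have hlower : ∀ k, (t k)⁻¹ * (N (x - y k + t k • v k) - N (x - y k)) ≤
      (t k)⁻¹ * (distN N (x + t k • v k) X - distN N x X) := fun k => by
    rw [hy, sub_add_eq_add_sub]
    gcongr
    · exact inv_nonneg.2 (ht k).le
    · exact hN.distN_le (hyX k)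
  have hupper := hd.hasFDerivAt.hasSemiDerivAt.tendsto_seq ht ht0 hv
  simp only [smul_eq_mul] at hupper
  refine tendsto_order.2 ⟨fun L hL => ?_, fun L hL => ?_⟩
  · filter_upwards [hN.eventually_lt_slope hd ht (tendsto_const_nhds.sub hylim) hv hL]
      with k hk using hk.trans_le (hlower k)
  · filter_upwards [hupper.eventually (gt_mem_nhds hL)]
      with k hk using (hN.slope_distN_le (ht k) (v k) hy₀ hxy₀).trans_lt hk

theorem hasSemiDerivAt_distN_of_notMem
    (hdiff : ∀ z, z ≠ 0 → DifferentiableAt ℝ N z) (hX : IsClosed X) (hne : X.Nonempty)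
    (hx : x ∉ X) :
    HasSemiDerivAt (fun z => distN N z X) x (fun w =>
      sInf ((fun y => fderiv ℝ N (x - y) w) '' {y ∈ X | N (x - y) = distN N x X})) := by
  choose Y hYX hY using hN.exists_distN_eq hX hne
  have hdiffX : ∀ y ∈ X, DifferentiableAt ℝ N (x - y) := fun y hy =>
    hdiff _ (sub_ne_zero.2 fun h => hx (h ▸ hy))
  refine hasSemiDerivAt_of_subseq fun w t v ht ht0 hv => ?_
  have hq : Tendsto (fun k => x + t k • v k) atTop (𝓝 x) := by
    simpa using tendsto_const_nhds.add (ht0.smul hv)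
  obtain ⟨z, φ, hφ, hz⟩ := hN.exists_subseq_tendsto_of_le (hq.sub_const (Y x)) fun k => by
    rw [← hY]
    exact hN.distN_le (hYX x)
  obtain ⟨y₀, rfl⟩ : ∃ y₀, z = x - y₀ := ⟨x - z, (sub_sub_cancel x z).symm⟩
  have hφ' := hφ.tendsto_atTop
  have hyφ : Tendsto (fun k => Y (x + t (φ k) • v (φ k))) atTop (𝓝 y₀) := by
    simpa using (hq.comp hφ').sub hz
  have hy₀X : y₀ ∈ X := hX.mem_of_tendsto hyφ (.of_forall fun k => hYX _)
  have hy₀ : N (x - y₀) = distN N x X := by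
    refine le_antisymm ?_ (hN.distN_le hy₀X)
    rw [hY x]
    refine le_of_tendsto_of_tendsto' ((hN.continuous.tendsto _).comp hz)
      ((hN.continuous.tendsto _).comp ((hq.comp hφ').sub_const (Y x))) fun k => ?_
    simp only [Function.comp_apply, ← hY]
    exact hN.distN_le (hYX x)
  have hlim := hN.tendsto_slope_distN hy₀X hy₀ (hdiffX _ hy₀X) (fun k => ht (φ k))
    (ht0.comp hφ') (hv.comp hφ') (fun k => hYX _) (fun k => hY _) hyφ
  have hleast : IsLeast ((fun y => fderiv ℝ N (x - y) w) '' {y ∈ X | N (x - y) = distN N x X})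
      (fderiv ℝ N (x - y₀) w) := by
    refine ⟨⟨y₀, ⟨hy₀X, hy₀⟩, rfl⟩, ?_⟩
    rintro _ ⟨y, ⟨hyX, hxy⟩, rfl⟩
    exact le_of_tendsto_of_tendsto' hlim
      ((hdiffX y hyX).hasFDerivAt.hasSemiDerivAt.tendsto_seq (fun k => ht (φ k))
        (ht0.comp hφ') (hv.comp hφ'))
      fun k => hN.slope_distN_le (ht _) _ hyX hxy
  exact ⟨φ, hleast.csInf_eq ▸ hlim⟩

end IsNorm

/-- For a Fréchet smooth norm `N = ‖·‖_*` and a nonempty closed set `X`: at any `x ∈ X`,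
`X` is geometrically derivable at `x` iff `p = dist_*(·;X)` is semi-differentiable at `x`;
consequently `p` is semi-differentiable on all of `ℝⁿ` iff `X` is geometrically derivable at
every point of `X`. -/
theorem stmt10 {n : ℕ} (N : En n → ℝ)
    (hN0 : ∀ z, N z = 0 ↔ z = 0)
    (hNsmul : ∀ (a : ℝ) z, N (a • z) = |a| * N z)
    (hNadd : ∀ z₁ z₂, N (z₁ + z₂) ≤ N z₁ + N z₂)
    (hNdiff : ∀ z, z ≠ 0 → DifferentiableAt ℝ N z)
    (X : Set (En n)) (hX : IsClosed X) (hne : X.Nonempty) :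
    (∀ x ∈ X, (geomDerivableAt X x ↔ ∃ g, HasSemiDerivAt (fun z => distN N z X) x g)) ∧
    ((∀ x : En n, ∃ g, HasSemiDerivAt (fun z => distN N z X) x g) ↔
      ∀ x ∈ X, geomDerivableAt X x) := by
  have hN : IsNorm N := ⟨hN0, hNsmul, hNadd⟩
  have hmem : ∀ x ∈ X,
      (geomDerivableAt X x ↔ ∃ g, HasSemiDerivAt (fun z => distN N z X) x g) :=
    fun x hx => ⟨fun h => ⟨_, hN.hasSemiDerivAt_distN_of_geomDerivableAt hX hx h⟩,
      fun ⟨_, hg⟩ => hN.geomDerivableAt_of_hasSemiDerivAt_distN hX hx hg⟩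
  refine ⟨hmem, fun h x hx => (hmem x hx).2 (h x), fun h x => ?_⟩
  by_cases hx : x ∈ X
  · exact (hmem x hx).1 (h x hx)
  · exact ⟨_, hN.hasSemiDerivAt_distN_of_notMem hNdiff hX hne hx⟩
end

section
/- Consider the problem: minimize φ(x) subject to F(x) ∈ X, where X ⊆ ℝᵐ is closed, φ : ℝⁿ → ℝ is lower semicontinuous, F is semi-differentiable, there exists x₀ with F(x₀) ∈ X, and there exist M ≥ 0, ρ₀ ≥ 0, α ≥ 2 with φ(x) + ρ₀·dist^α(F(x); X) ≥ −M for all x. Given ε > 0 with ε ≤ 1/√(2φ(x₀) + 2M), choose ρ ≥ ρ₀ + (φ(x₀)+M)/ε^α and set f_{α,ρ}(x) := φ(x) + ρ·dist^α(F(x); X). Then there exists x̄ in the sublevel set S := {x : f_{α,ρ}(x) ≤ φ(x₀)} that is an ε-stationary point of f_{α,ρ}, i.e. d f_{α,ρ}(x̄)(w) ≥ −ε‖w‖ for all w ∈ ℝⁿ. -/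
open Filter Topology Metric Set

/-- Ekeland's variational principle (the form we need). -/
theorem ekeland_aux {Y : Type*} [MetricSpace Y] [CompleteSpace Y]
    (f : Y → ℝ) (hf : LowerSemicontinuous f) (B : ℝ) (hB : ∀ x, B ≤ f x)
    (ε : ℝ) (hε : 0 < ε) (x₀ : Y) :
    ∃ xb, f xb ≤ f x₀ ∧ ∀ x, f xb ≤ f x + ε * dist x xb := by
  -- choice of almost-minimizers on the "slope" sets
  have hstep : ∀ (k : ℕ) (x : Y), ∃ y, (f y + ε * dist y x ≤ f x) ∧
      ∀ z, f z + ε * dist z x ≤ f x → f y < f z + (1/2) ^ k := by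
    intro k x
    set S : Set Y := {y | f y + ε * dist y x ≤ f x} with hS
    have hxS : x ∈ S := by simp [hS]
    have hne : (f '' S).Nonempty := ⟨f x, x, hxS, rfl⟩
    have hbdd : BddBelow (f '' S) := ⟨B, by rintro _ ⟨y, -, rfl⟩; exact hB y⟩
    obtain ⟨a, ⟨y, hyS, rfl⟩, hya⟩ :=
      Real.lt_sInf_add_pos hne (show (0:ℝ) < (1/2) ^ k by positivity)
    refine ⟨y, hyS, fun z hz => lt_of_lt_of_le hya ?_⟩
    have := csInf_le hbdd (mem_image_of_mem f hz)
    linarith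
  choose step hstep1 hstep2 using hstep
  let seq : ℕ → Y := fun k => Nat.rec x₀ (fun k x => step k x) k
  have seq0 : seq 0 = x₀ := rfl
  have seqS : ∀ k, seq (k + 1) = step k (seq k) := fun _ => rfl
  have hA : ∀ k, f (seq (k + 1)) + ε * dist (seq (k + 1)) (seq k) ≤ f (seq k) := by
    intro k; rw [seqS]; exact hstep1 k (seq k)
  have hBk : ∀ k z, f z + ε * dist z (seq k) ≤ f (seq k) →
      f (seq (k + 1)) < f z + (1/2) ^ k := by
    intro k; rw [seqS]; exact hstep2 k (seq k)
  -- telescoping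
  have htel : ∀ k l, k ≤ l → f (seq l) + ε * dist (seq l) (seq k) ≤ f (seq k) := by
    intro k l hkl
    induction l, hkl using Nat.le_induction with
    | base => simp
    | succ l hkl ih =>
      have h1 := hA l
      have tri : dist (seq (l + 1)) (seq k) ≤
          dist (seq (l + 1)) (seq l) + dist (seq l) (seq k) := dist_triangle _ _ _
      nlinarith [mul_le_mul_of_nonneg_left tri hε.le]
  have hmono : Antitone fun k => f (seq k) := by
    apply antitone_nat_of_succ_le
    intro k
    have := hA k
    nlinarith [dist_nonneg (x := seq (k + 1)) (y := seq k)]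
  have hbdd : BddBelow (range fun k => f (seq k)) := ⟨B, by rintro _ ⟨k, rfl⟩; exact hB _⟩
  set L : ℝ := ⨅ k, f (seq k) with hLdef
  have hL : ∀ k, L ≤ f (seq k) := fun k => ciInf_le hbdd k
  have htend : Tendsto (fun k => f (seq k)) atTop (𝓝 L) := tendsto_atTop_ciInf hmono hbdd
  -- Cauchy
  have hcauchy : CauchySeq seq := by
    rw [Metric.cauchySeq_iff']
    intro δ hδ
    have : ∀ᶠ k in atTop, f (seq k) < L + ε * δ :=
      htend.eventually (Filter.Tendsto.eventually_lt_const (by nlinarith) tendsto_id)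
    obtain ⟨N, hN⟩ := this.exists
    refine ⟨N, fun n hn => ?_⟩
    have h1 := htel N n hn
    have h2 := hL n
    have : ε * dist (seq n) (seq N) < ε * δ := by linarith
    exact lt_of_mul_lt_mul_left this hε.le
  obtain ⟨xb, hxb⟩ := cauchySeq_tendsto_of_complete hcauchy
  -- the limit is in every slope set
  have hclose : ∀ k, f xb + ε * dist xb (seq k) ≤ f (seq k) := by
    intro k
    have hlsc : LowerSemicontinuous fun x => f x + ε * dist x (seq k) :=
      hf.add ((continuous_const.mul (continuous_id.dist continuous_const)).lowerSemicontinuous)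
    have hcl : IsClosed {x | f x + ε * dist x (seq k) ≤ f (seq k)} :=
      hlsc.isClosed_preimage (f (seq k))
    exact hcl.mem_of_tendsto hxb (eventually_atTop.2 ⟨k, fun l hl => htel k l hl⟩)
  refine ⟨xb, ?_, ?_⟩
  · have := hclose 0
    rw [seq0] at this
    nlinarith [dist_nonneg (x := xb) (y := x₀)]
  · intro x
    by_contra hcon
    push_neg at hcon
    have hyk : ∀ k, f x + ε * dist x (seq k) ≤ f (seq k) := by
      intro k
      have h1 := hclose k
      have tri : dist x (seq k) ≤ dist x xb + dist xb (seq k) := dist_triangle _ _ _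
      nlinarith [mul_le_mul_of_nonneg_left tri hε.le]
    have h2 : ∀ k : ℕ, f xb < f x + (1/2) ^ k := by
      intro k
      have h3 := hBk k x (hyk k)
      have h4 := hclose (k + 1)
      nlinarith [dist_nonneg (x := xb) (y := seq (k + 1))]
    have h5 : f xb ≤ f x := by
      refine le_of_forall_pos_le_add fun δ hδ => ?_
      obtain ⟨k, hk⟩ := exists_pow_lt_of_lt_one hδ (by norm_num : (1/2 : ℝ) < 1)
      exact le_of_lt (lt_trans (h2 k) (by linarith))
    nlinarith [dist_nonneg (x := x) (y := xb)]

/-- A semi-differentiable map is continuous. -/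
theorem continuous_of_semideriv {V W : Type*} [NormedAddCommGroup V] [NormedSpace ℝ V]
    [NormedAddCommGroup W] [NormedSpace ℝ W] (F : V → W) (dF : V → V → W)
    (hF : ∀ x, HasSemiDerivAt F x (dF x)) : Continuous F := by
  rw [continuous_iff_continuousAt]
  intro x
  have h0 : Tendsto (fun p : ℝ × V => F (x + p.1 • p.2)) ((𝓝[>] (0:ℝ)) ×ˢ 𝓝 (0 : V))
      (𝓝 (F x)) := by
    have h1 : Tendsto (fun p : ℝ × V => p.1 • ((p.1)⁻¹ • (F (x + p.1 • p.2) - F x)))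
        ((𝓝[>] (0:ℝ)) ×ˢ 𝓝 (0 : V)) (𝓝 ((0 : ℝ) • dF x 0)) := by
      exact (tendsto_fst.mono_left (Filter.prod_mono nhdsWithin_le_nhds le_rfl)).smul (hF x 0)
    rw [zero_smul] at h1
    have h2 : ∀ᶠ p : ℝ × V in (𝓝[>] (0:ℝ)) ×ˢ 𝓝 (0 : V),
        p.1 • ((p.1)⁻¹ • (F (x + p.1 • p.2) - F x)) = F (x + p.1 • p.2) - F x := by
      filter_upwards [prod_mem_prod self_mem_nhdsWithin univ_mem] with p hp
      rw [smul_inv_smul₀ (ne_of_gt hp.1)]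
    have h3 : Tendsto (fun p : ℝ × V => F (x + p.1 • p.2) - F x)
        ((𝓝[>] (0:ℝ)) ×ˢ 𝓝 (0 : V)) (𝓝 0) := h1.congr' h2
    have := h3.add_const (F x)
    simpa using this
  rw [Metric.continuousAt_iff]
  intro δ hδ
  have hmem : {p : ℝ × V | dist (F (x + p.1 • p.2)) (F x) < δ} ∈
      (𝓝[>] (0:ℝ)) ×ˢ 𝓝 (0 : V) := h0 (Metric.ball_mem_nhds _ hδ)
  obtain ⟨s, hs, A, hA, hsub⟩ := Filter.mem_prod_iff.1 hmem
  obtain ⟨δ₁, hδ₁, hIoo⟩ := mem_nhdsGT_iff_exists_Ioo_subset.1 hs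
  obtain ⟨r, hr, hball⟩ := Metric.mem_nhds_iff.1 hA
  refine ⟨(min δ₁ r) ^ 2, pow_pos (lt_min hδ₁ hr) 2, fun {y} hy => ?_⟩
  rcases eq_or_ne y x with rfl | hne
  · simpa using hδ
  · set u : V := y - x with hu
    have hu0 : u ≠ 0 := sub_ne_zero_of_ne hne
    have hun : ‖u‖ < (min δ₁ r) ^ 2 := by
      rw [hu, ← dist_eq_norm]; exact hy
    set t : ℝ := Real.sqrt ‖u‖ with ht
    have htpos : 0 < t := Real.sqrt_pos.2 (norm_pos_iff.2 hu0)
    have htlt : t < min δ₁ r := by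
      have : Real.sqrt ‖u‖ < Real.sqrt ((min δ₁ r) ^ 2) :=
        Real.sqrt_lt_sqrt (norm_nonneg _) hun
      rwa [Real.sqrt_sq (le_min hδ₁.le hr.le)] at this
    have hts : t ∈ s := hIoo ⟨htpos, lt_of_lt_of_le htlt (min_le_left _ _)⟩
    have hwA : t⁻¹ • u ∈ A := by
      apply hball
      rw [Metric.mem_ball, dist_zero_right, norm_smul, norm_inv, Real.norm_eq_abs,
        abs_of_pos htpos]
      have htt : t * t = ‖u‖ := Real.mul_self_sqrt (norm_nonneg _)
      have : t⁻¹ * ‖u‖ = t := by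
        rw [← htt, inv_mul_cancel_left₀ (ne_of_gt htpos)]
      rw [this]
      exact lt_of_lt_of_le htlt (min_le_right _ _)
    have := hsub (Set.mk_mem_prod hts hwA)
    simp only [Set.mem_setOf_eq] at this
    rw [smul_inv_smul₀ (ne_of_gt htpos)] at this
    rw [hu] at this
    simpa [dist_comm] using this

/-- Existence of ε-stationary points of the penalization `f_{α,ρ} = φ + ρ·distᵅ(F(·);X)` in
the sublevel set `{x : f_{α,ρ}(x) ≤ φ(x₀)}`, under assumptions (A1) and (A2). -/
theorem stmt17 {n m : ℕ} (φ : En n → ℝ) (hφ : LowerSemicontinuous φ)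
    (F : En n → En m) (dF : En n → En n → En m) (hF : ∀ x, HasSemiDerivAt F x (dF x))
    (X : Set (En m)) (hX : IsClosed X)
    (x₀ : En n) (hx₀ : F x₀ ∈ X)
    (M ρ₀ α : ℝ) (hM : 0 ≤ M) (hρ₀ : 0 ≤ ρ₀) (hα : 2 ≤ α)
    (hbound : ∀ x, -M ≤ φ x + ρ₀ * infDist (F x) X ^ α)
    (ε : ℝ) (hε : 0 < ε) (hε2 : ε ≤ 1 / Real.sqrt (2 * φ x₀ + 2 * M))
    (ρ : ℝ) (hρ : ρ₀ + (φ x₀ + M) / ε ^ α ≤ ρ) :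
    ∃ xb : En n, (φ xb + ρ * infDist (F xb) X ^ α ≤ φ x₀) ∧
      ∀ w : En n, ((-(ε * ‖w‖) : ℝ) : EReal) ≤
        subderiv (fun x => φ x + ρ * infDist (F x) X ^ α) xb w := by
  set f : En n → ℝ := fun x => φ x + ρ * infDist (F x) X ^ α with hf
  have hFc : Continuous F := continuous_of_semideriv F dF hF
  have hd0 : infDist (F x₀) X = 0 := infDist_zero_of_mem hx₀
  have hfx₀ : f x₀ = φ x₀ := by
    simp [hf, hd0, Real.zero_rpow (by linarith : α ≠ 0)]
  have hφx₀M : 0 ≤ φ x₀ + M := by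
    have := hbound x₀
    rw [hd0, Real.zero_rpow (by linarith : α ≠ 0)] at this
    linarith
  have hρ₀ρ : ρ₀ ≤ ρ := by
    have h1 : 0 ≤ (φ x₀ + M) / ε ^ α :=
      div_nonneg hφx₀M (Real.rpow_nonneg hε.le α)
    linarith
  have hflsc : LowerSemicontinuous f := by
    apply hφ.add
    apply Continuous.lowerSemicontinuous
    exact continuous_const.mul (((continuous_infDist_pt X).comp hFc).rpow_const
      (fun x => Or.inr (by linarith)))
  have hfbd : ∀ x, -M ≤ f x := by
    intro x
    have h1 := hbound x
    have h2 : 0 ≤ infDist (F x) X ^ α := Real.rpow_nonneg infDist_nonneg α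
    have h3 : ρ₀ * infDist (F x) X ^ α ≤ ρ * infDist (F x) X ^ α :=
      mul_le_mul_of_nonneg_right hρ₀ρ h2
    simp only [hf]
    linarith
  obtain ⟨xb, hle, hmin⟩ := ekeland_aux f hflsc (-M) hfbd ε hε x₀
  rw [hfx₀] at hle
  refine ⟨xb, hle, fun w => ?_⟩
  have hev : ∀ᶠ p : ℝ × En n in (𝓝[>] (0:ℝ)) ×ˢ 𝓝 w,
      ((-(ε * ‖p.2‖) : ℝ) : EReal) ≤ (((f (xb + p.1 • p.2) - f xb) / p.1 : ℝ) : EReal) := by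
    filter_upwards [prod_mem_prod self_mem_nhdsWithin univ_mem] with p hp
    have hp1 : (0:ℝ) < p.1 := hp.1
    have h1 := hmin (xb + p.1 • p.2)
    have h2 : dist (xb + p.1 • p.2) xb = p.1 * ‖p.2‖ := by
      rw [dist_eq_norm]
      simp [norm_smul, abs_of_pos hp1]
    rw [h2] at h1
    have h3 : -(ε * ‖p.2‖) ≤ (f (xb + p.1 • p.2) - f xb) / p.1 := by
      rw [le_div_iff₀ hp1]
      nlinarith
    exact_mod_cast EReal.coe_le_coe_iff.2 h3
  have h1 : Filter.liminf (fun p : ℝ × En n => ((-(ε * ‖p.2‖) : ℝ) : EReal))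
      ((𝓝[>] (0:ℝ)) ×ˢ 𝓝 w) ≤ subderiv f xb w := Filter.liminf_le_liminf hev
  have h2 : Tendsto (fun p : ℝ × En n => ((-(ε * ‖p.2‖) : ℝ) : EReal))
      ((𝓝[>] (0:ℝ)) ×ˢ 𝓝 w) (𝓝 ((-(ε * ‖w‖) : ℝ) : EReal)) := by
    apply (continuous_coe_real_ereal.tendsto _).comp
    have hreal : Tendsto (fun p : ℝ × En n => -(ε * ‖p.2‖)) (𝓝 ((0:ℝ), w))
        (𝓝 (-(ε * ‖w‖))) := by
      apply Filter.Tendsto.neg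
      exact tendsto_const_nhds.mul (continuous_snd.norm.tendsto _)
    exact hreal.mono_left (by rw [nhds_prod_eq]; exact Filter.prod_mono nhdsWithin_le_nhds le_rfl)
  rw [← h2.liminf_eq] at *
  exact h1
end
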